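/- arXiv:2307.16552 — 2 statements merged into one kernel-verified Lean document; each statement's English description precedes it below -/
import Mathlib

section
/- Let F be an endofunctor on Set and let (L_i)_{i ∈ I} be any family of lax F-liftings. Then the assignment L defined by L R := ⋂_{i ∈ I} L_i R (pointwise intersection of relations) is again a lax F-lifting, and it is the greatest lower bound of the family in the pointwise inclusion order. Consequently, the collection Lift(F) of all lax F-liftings, ordered pointwise by inclusion, is a complete lattice. -/
universe u v

open CategoryTheory

/-- Relational composition, as `Rel.comp` was defined in the older Mathlib. -/
def Rel.comp {α β γ : Type*} (r : Rel α β) (s : Rel β γ) : Rel α γ :=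
  fun x z => ∃ y, r x y ∧ s y z

/-- Converse relation, as `Rel.inv` was defined in the older Mathlib. -/
def Rel.inv {α β : Type*} (r : Rel α β) : Rel β α := flip r

/-- The graph of a function, as a relation. -/
def gr {X Y : Type u} (f : X → Y) : Rel X Y := fun x y => f x = y

/-- A lax lifting of an endofunctor `F` on `Set` to relations: monotone, laxly
functorial, and laxly extending graphs and converse graphs. -/
structure LaxLifting (F : Type u ⥤ Type u) : Type (u + 1) where
  map : ∀ {X Y : Type u}, Rel X Y → Rel (F.obj X) (F.obj Y)
  mono : ∀ {X Y : Type u} {R S : Rel X Y}, R ≤ S → map R ≤ map S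
  laxComp : ∀ {X Y Z : Type u} (R : Rel X Y) (S : Rel Y Z),
    (map R).comp (map S) ≤ map (R.comp S)
  graph_le : ∀ {X Y : Type u} (f : X → Y), gr (F.map (TypeCat.ofHom f)) ≤ map (gr f)
  graphInv_le : ∀ {X Y : Type u} (f : X → Y), (gr (F.map (TypeCat.ofHom f))).inv ≤ map (gr f).inv

/-- Pointwise order on lax liftings. -/
def LiftLE {F : Type u ⥤ Type u} (L L' : LaxLifting F) : Prop :=
  ∀ (X Y : Type u) (R : Rel X Y), L.map R ≤ L'.map R

/-! Every axiom of a lax lifting concludes that one pair is related under hypotheses that only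
assert relatedness of pairs, so the axioms survive pointwise intersection. The intersection is
then the infimum in the pointwise order, and a partial order with all infima is a complete
lattice. -/

attribute [ext] LaxLifting

namespace LaxLifting

variable {F : Type u ⥤ Type u}

instance : PartialOrder (LaxLifting F) :=
  PartialOrder.lift (fun L (X Y : Type u) => @L.map X Y) fun _ _ h => LaxLifting.ext h

theorem le_iff_liftLE {L L' : LaxLifting F} : L ≤ L' ↔ LiftLE L L' := Iff.rfl

def iInter {ι : Sort*} (L : ι → LaxLifting F) : LaxLifting F where
  map R a b := ∀ i, (L i).map R a b
  mono h a b hab i := (L i).mono h a b (hab i)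
  laxComp R S := fun a c ⟨b, hab, hbc⟩ i => (L i).laxComp R S a c ⟨b, hab i, hbc i⟩
  graph_le f a b hab i := (L i).graph_le f a b hab
  graphInv_le f a b hab i := (L i).graphInv_le f a b hab

theorem iInter_le {ι : Sort*} (L : ι → LaxLifting F) (i : ι) : iInter L ≤ L i :=
  fun _ _ _ _ _ h => h i

theorem le_iInter {ι : Sort*} {L : ι → LaxLifting F} {L' : LaxLifting F}
    (h : ∀ i, L' ≤ L i) : L' ≤ iInter L :=
  fun _ _ _ _ _ hab i => h i _ _ _ _ _ hab

theorem isGLB_iInter {ι : Sort*} (L : ι → LaxLifting F) : IsGLB (Set.range L) (iInter L) :=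
  ⟨Set.forall_mem_range.2 (iInter_le L), fun _ hL' => le_iInter fun i => hL' ⟨i, rfl⟩⟩

instance : InfSet (LaxLifting F) := ⟨fun s => iInter ((↑) : s → LaxLifting F)⟩

instance : CompleteLattice (LaxLifting F) :=
  completeLatticeOfInf _ fun s => by
    have h := isGLB_iInter ((↑) : s → LaxLifting F)
    rwa [Subtype.range_coe] at h

end LaxLifting

/-- Pointwise intersections of lax liftings are lax liftings and are greatest lower
bounds; consequently the lax liftings of `F` form a complete lattice under the
pointwise inclusion order. -/
theorem liftings_complete_lattice (F : Type u ⥤ Type u) :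
    (∀ (ι : Type v) (Li : ι → LaxLifting F),
      ∃ L : LaxLifting F,
        (∀ (X Y : Type u) (R : Rel X Y) (a : F.obj X) (b : F.obj Y),
          L.map R a b ↔ ∀ i : ι, (Li i).map R a b) ∧
        (∀ i : ι, LiftLE L (Li i)) ∧
        (∀ L' : LaxLifting F, (∀ i : ι, LiftLE L' (Li i)) → LiftLE L' L)) ∧
    (∃ inst : CompleteLattice (LaxLifting F),
      ∀ L L' : LaxLifting F, inst.le L L' ↔ LiftLE L L') :=
  ⟨fun _ Li => ⟨LaxLifting.iInter Li, fun _ _ _ _ _ => Iff.rfl, LaxLifting.iInter_le Li,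
      fun _ => LaxLifting.le_iInter⟩,
    ⟨inferInstance, fun _ _ => LaxLifting.le_iff_liftLE⟩⟩
end

section
/- Every endofunctor F on Set admits a minimal lax F-lifting: there exists a lax F-lifting L₀ such that for every lax F-lifting L and every relation R : X ⇸ Y, L₀ R ⊆ L R. -/
universe u v

open CategoryTheory

/-! In each axiom of a lax lifting `L.map` occurs only covariantly (alone on the right, inside a
composition on the left), so the axioms survive pointwise intersections of arbitrary families;
the minimal lax lifting is the intersection of all lax liftings. -/

namespace LaxLifting

variable {F : Type u ⥤ Type u}

def iInf {ι : Sort v} (L : ι → LaxLifting F) : LaxLifting F where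
  map R a b := ∀ i, (L i).map R a b
  mono hRS a b hab i := (L i).mono hRS a b (hab i)
  laxComp R S := by
    rintro a c ⟨b, hab, hbc⟩ i
    exact (L i).laxComp R S a c ⟨b, hab i, hbc i⟩
  graph_le f a b hab i := (L i).graph_le f a b hab
  graphInv_le f a b hab i := (L i).graphInv_le f a b hab

theorem iInf_map_le {ι : Sort v} (L : ι → LaxLifting F) (i : ι) {X Y : Type u} (R : Rel X Y) :
    (iInf L).map R ≤ (L i).map R :=
  fun _ _ hab => hab i

end LaxLifting

/-- Every endofunctor on Set admits a minimal lax lifting. -/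
theorem exists_minimal_lifting (F : Type u ⥤ Type u) :
    ∃ L₀ : LaxLifting F, ∀ (L : LaxLifting F) (X Y : Type u) (R : Rel X Y),
      L₀.map R ≤ L.map R :=
  ⟨LaxLifting.iInf id, fun L _ _ R => LaxLifting.iInf_map_le id L R⟩
end
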